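/- arXiv:1812.03038 — 2 statements merged into one kernel-verified Lean document; each statement's English description precedes it below -/
import Mathlib

section
/- Let b11, c1 be reals with c1 < 0, b11 > 0, b11^2 - 4c1 > 0, and let x_a < 0 < x_b be the roots of 1 + b11*x + c1*x^2 = 0. Let b21, d2 be reals with d2 - (b21/c1)*b11 < 0 and |d2 - (b21/c1)*b11| sufficiently large. Then 1 + b21*x_a^2 + d2*x_a > 0 and 1 + b21*x_b^2 + d2*x_b < 0. -/
theorem x2_eigenvalue_signs (b11 c1 b21 xa xb : ℝ) (hc : c1 < 0) (hb : b11 > 0)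
    (hd : b11^2 - 4*c1 > 0)
    (ha : 1 + b11*xa + c1*xa^2 = 0) (hbr : 1 + b11*xb + c1*xb^2 = 0)
    (haneg : xa < 0) (hbpos : 0 < xb) :
    ∃ M > (0:ℝ), ∀ d2 : ℝ, d2 - (b21/c1)*b11 < -M →
      1 + b21*xa^2 + d2*xa > 0 ∧ 1 + b21*xb^2 + d2*xb < 0 := by
  set C : ℝ := (b21/c1)*b11 with hC
  set A : ℝ := 1 + b21*xa^2 + C*xa with hA
  set B : ℝ := 1 + b21*xb^2 + C*xb with hB
  have hxa : (0:ℝ) < -xa := by linarith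
  refine ⟨(1+|A|)/(-xa) + (1+|B|)/xb, ?_, ?_⟩
  · have h1 : (0:ℝ) < (1+|A|)/(-xa) := by positivity
    have h2 : (0:ℝ) < (1+|B|)/xb := by positivity
    linarith
  · intro d2 hd2
    have hd2' : d2 < C - ((1+|A|)/(-xa) + (1+|B|)/xb) := by linarith
    have habs1 : A ≤ |A| := le_abs_self A
    have habs1' : -|A| ≤ A := neg_abs_le A
    have habs2 : B ≤ |B| := le_abs_self B
    have habs2' : -|B| ≤ B := neg_abs_le B
    have e1 : (1+|A|)/(-xa) * (-xa) = 1+|A| :=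
      div_mul_cancel₀ _ (ne_of_gt hxa)
    have e2 : (1+|B|)/xb * xb = 1+|B| :=
      div_mul_cancel₀ _ (ne_of_gt hbpos)
    have h1 : (0:ℝ) < (1+|A|)/(-xa) := by positivity
    have h2 : (0:ℝ) < (1+|B|)/xb := by positivity
    constructor
    · have hmul : d2 * xa > (C - ((1+|A|)/(-xa) + (1+|B|)/xb)) * xa :=
        (mul_lt_mul_of_neg_right hd2' haneg)
      nlinarith [mul_pos h2 hxa]
    · have hmul : d2 * xb < (C - ((1+|A|)/(-xa) + (1+|B|)/xb)) * xb :=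
        (mul_lt_mul_of_pos_right hd2' hbpos)
      nlinarith [mul_pos h1 hbpos]
end

section
/- Let b11, c1 be reals with c1 < 0, b11^2 - 4c1 > 0, and let x_a < 0 < x_b be the roots of 1 + b11*x + c1*x^2 = 0. Let b31, d3 be reals with d3 - (b31/c1)*b11 > 0 and sufficiently large. Then 1 + b31*x_a^2 + d3*x_a < 0 and 1 + b31*x_b^2 + d3*x_b > 0. -/
theorem x3_eigenvalue_signs (b11 c1 b31 xa xb : ℝ) (hc : c1 < 0)
    (hd : b11^2 - 4*c1 > 0)
    (ha : 1 + b11*xa + c1*xa^2 = 0) (hbr : 1 + b11*xb + c1*xb^2 = 0)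
    (haneg : xa < 0) (hbpos : 0 < xb) :
    ∃ M > (0:ℝ), ∀ d3 : ℝ, d3 - (b31/c1)*b11 > M →
      1 + b31*xa^2 + d3*xa < 0 ∧ 1 + b31*xb^2 + d3*xb > 0 := by
  set K := (b31/c1)*b11 with hK
  set A := max ((1 + b31*xa^2)/(-xa)) ((-(1 + b31*xb^2))/xb) with hA
  refine ⟨max 1 (A - K), lt_of_lt_of_le one_pos (le_max_left _ _), ?_⟩
  intro d3 hd3
  have h1 : d3 > A - K + K := by
    have := lt_of_le_of_lt (le_max_right 1 (A - K)) hd3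
    linarith
  have h2 : d3 > A := by linarith
  have hxa : (1 + b31*xa^2)/(-xa) < d3 := lt_of_le_of_lt (le_max_left _ _) h2
  have hxb : (-(1 + b31*xb^2))/xb < d3 := lt_of_le_of_lt (le_max_right _ _) h2
  constructor
  · have := (div_lt_iff₀ (by linarith : (0:ℝ) < -xa)).1 hxa
    nlinarith
  · have := (div_lt_iff₀ hbpos).1 hxb
    nlinarith
end
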